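/- If Π is a cut-free, identity-free proof of a sequent Γ in unit-only multiplicative linear logic and Π ⇒ λ (λ is a translation of Π), then (Γ, λ) is a proof net, i.e. λ is a correct linking for Γ. -/

import Mathlib

namespace MLL

/-- Formulas of unit-only MLL, with every connective and unit occurrence
carrying a name (a natural number). -/
inductive Formula : Type
  | one : ℕ → Formula
  | bot : ℕ → Formula
  | parr : ℕ → Formula → Formula → Formula
  | tens : ℕ → Formula → Formula → Formula
deriving DecidableEq

namespace Formula

/-- The name of the root connective/unit of a formula. -/
def name : Formula → ℕ
  | one n => n
  | bot n => n
  | parr n _ _ => n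
  | tens n _ _ => n

/-- All names occurring in a formula. -/
def names : Formula → Finset ℕ
  | one n => {n}
  | bot n => {n}
  | parr n A B => insert n (A.names ∪ B.names)
  | tens n A B => insert n (A.names ∪ B.names)

/-- All subformula occurrences of a formula. -/
def subs : Formula → List Formula
  | one n => [one n]
  | bot n => [bot n]
  | parr n A B => parr n A B :: (A.subs ++ B.subs)
  | tens n A B => tens n A B :: (A.subs ++ B.subs)

end Formula

/-- A sequent is a multiset of (named) formulas. -/
abbrev Sequent := Multiset Formula

/-- The names occurring in a sequent. -/
def seqNames (Γ : Sequent) : Finset ℕ := (Γ.map Formula.names).sup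

/-- The subformula occurrences of a sequent. -/
def seqSubs (Γ : Sequent) : Multiset Formula :=
  Γ.bind (fun A => (A.subs : Multiset Formula))

/-- `A` is a subformula occurrence of `Γ`. -/
def HasSub (Γ : Sequent) (A : Formula) : Prop := A ∈ seqSubs Γ

/-- `a` is the name of a `⊥`-occurrence of `Γ`. -/
def IsBotName (Γ : Sequent) (a : ℕ) : Prop := HasSub Γ (.bot a)

/-- `a` is the name of a `1`-occurrence of `Γ`. -/
def IsOneName (Γ : Sequent) (a : ℕ) : Prop := HasSub Γ (.one a)

/-- The sequent is well-named: all occurrences carry pairwise distinct names. -/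
def WellNamed (Γ : Sequent) : Prop := ((seqSubs Γ).map Formula.name).Nodup

/-- A linking: a function assigning to (the name of) each `⊥`-occurrence
a target name (the jump). -/
abbrev Linking := ℕ → ℕ

/-- A switching: a choice of left/right for each par occurrence. -/
abbrev Switching := ℕ → Bool

/-- The linking sends (names of) `⊥`-occurrences to names of `Γ`. -/
def ValidLinking (Γ : Sequent) (lk : Linking) : Prop :=
  ∀ a, IsBotName Γ a → lk a ∈ seqNames Γ

/-- The edges of the switching graph for `Γ`, `lk` and the switching `σ`. -/
def switchAdj (Γ : Sequent) (lk : Linking) (σ : Switching) (x y : ℕ) : Prop :=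
  (∃ A B, HasSub Γ (.tens x A B) ∧ (y = A.name ∨ y = B.name)) ∨
  (∃ A B, HasSub Γ (.parr x A B) ∧ y = (if σ x then A.name else B.name)) ∨
  (IsBotName Γ x ∧ y = lk x)

/-- The switching graph for `Γ`, `lk` and `σ`. -/
def switchGraph (Γ : Sequent) (lk : Linking) (σ : Switching) : SimpleGraph ℕ :=
  SimpleGraph.fromRel (switchAdj Γ lk σ)

/-- Correctness of a linking: every switching graph (restricted to the names of `Γ`)
is acyclic and connected, i.e. a tree.  `(Γ, lk)` is a proof net iff `Correct Γ lk`. -/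
def Correct (Γ : Sequent) (lk : Linking) : Prop :=
  ValidLinking Γ lk ∧
  ∀ σ : Switching, ((switchGraph Γ lk σ).induce {x : ℕ | x ∈ seqNames Γ}).IsTree

/-- All jumps of the linking target `1`-occurrences. -/
def TargetsOnes (Γ : Sequent) (lk : Linking) : Prop :=
  ∀ a, IsBotName Γ a → IsOneName Γ (lk a)

/-- Two correct linkings describe the same proof net (they agree on all jumps). -/
def SameNet (Γ : Sequent) (lk lk' : Linking) : Prop :=
  Correct Γ lk ∧ Correct Γ lk' ∧ ∀ a, IsBotName Γ a → lk a = lk' a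

/-- A rewiring step between proof nets: the target of exactly one jump is changed. -/
def Rewire (Γ : Sequent) (lk lk' : Linking) : Prop :=
  Correct Γ lk ∧ Correct Γ lk' ∧
  ∃ a, IsBotName Γ a ∧ lk a ≠ lk' a ∧ ∀ b, IsBotName Γ b → b ≠ a → lk b = lk' b

/-- Equivalence of proof nets over `Γ`: the equivalence relation generated by rewiring. -/
def NetEquiv (Γ : Sequent) : Linking → Linking → Prop :=
  Relation.EqvGen (fun lk lk' => SameNet Γ lk lk' ∨ Rewire Γ lk lk')

end MLL

namespace MLL

/-- Cut-free, identity-free sequent proofs of unit-only MLL. -/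
inductive Proof : Sequent → Type
  | one (n : ℕ) : Proof {Formula.one n}
  | bot (n : ℕ) {Γ : Sequent} : Proof Γ → Proof (Formula.bot n ::ₘ Γ)
  | parr (n : ℕ) {Γ : Sequent} {A B : Formula} :
      Proof (A ::ₘ B ::ₘ Γ) → Proof (Formula.parr n A B ::ₘ Γ)
  | tens (n : ℕ) {Γ Δ : Sequent} {A B : Formula} :
      Proof (A ::ₘ Γ) → Proof (B ::ₘ Δ) → Proof (Formula.tens n A B ::ₘ (Γ + Δ))

/-- The translation relation `Π ⇒ λ` from proofs to linkings: for each
`⊥`-occurrence named `a`, `λ a` is a name in the context of the `(⊥)`-inference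
introducing `a`. -/
inductive Translates : {Γ : Sequent} → Proof Γ → Linking → Prop
  | one {n : ℕ} {lk : Linking} : Translates (Proof.one n) lk
  | bot {Γ : Sequent} {n : ℕ} {π : Proof Γ} {lk : Linking} :
      lk n ∈ seqNames Γ → Translates π lk → Translates (Proof.bot n π) lk
  | parr {Γ : Sequent} {A B : Formula} {n : ℕ} {π : Proof (A ::ₘ B ::ₘ Γ)} {lk : Linking} :
      Translates π lk → Translates (Proof.parr n π) lk
  | tens {Γ Δ : Sequent} {A B : Formula} {n : ℕ} {π₁ : Proof (A ::ₘ Γ)}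
      {π₂ : Proof (B ::ₘ Δ)} {lk : Linking} :
      Translates π₁ lk → Translates π₂ lk → Translates (Proof.tens n π₁ π₂) lk

end MLL

/-!
Every switching graph of the conclusion of an inference arises from those of its premisses by
adding the fresh vertex of the new `⊥` or connective: for `⊥` and `⅋` it becomes a leaf, joined to
the jump target `λ a` (a name of the context) or to the chosen premiss of the `⅋`; for `⊗` it joins
the two premiss trees, whose vertex sets are disjoint because the sequent is well named. Each step
preserves being a tree on the names of the sequent, and the jumps are valid because a jump
`a – λ a` with `λ a ≠ a` is an edge of that tree.
-/

namespace SimpleGraph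

variable {V : Type*} {G G₁ G₂ : SimpleGraph V}

theorem Walk.edges_subset_edgeSet_left_of_sup {u v : V} (p : (G₁ ⊔ G₂).Walk u v)
    (hd : Disjoint G₁.support G₂.support) (hu : u ∉ G₂.support) :
    ∀ e ∈ p.edges, e ∈ G₁.edgeSet := by
  induction p with
  | nil => simp
  | cons h p ih =>
    have h₁ := h.resolve_right fun h₂ => hu h₂.mem_support_left
    simp only [Walk.edges_cons, List.mem_cons, forall_eq_or_imp]
    exact ⟨h₁, ih (hd.notMem_of_mem_left h₁.mem_support_right)⟩

theorem isAcyclic_sup_of_disjoint_support (h₁ : G₁.IsAcyclic) (h₂ : G₂.IsAcyclic)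
    (hd : Disjoint G₁.support G₂.support) : (G₁ ⊔ G₂).IsAcyclic := by
  have key {H₁ H₂ : SimpleGraph V} (hH : H₁.IsAcyclic) (hd : Disjoint H₁.support H₂.support)
      {v : V} (c : (H₁ ⊔ H₂).Walk v v) (hc : c.IsCycle) (hv : v ∉ H₂.support) : False :=
    hH (c.transfer _ (c.edges_subset_edgeSet_left_of_sup hd hv)) (hc.transfer _)
  intro v c hc
  by_cases hv : v ∈ G₂.support
  · exact key h₂ hd.symm (c.mapLe (sup_comm G₁ G₂).le) ((Walk.isCycle_mapLe _).mpr hc)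
      (hd.notMem_of_mem_right hv)
  · exact key h₁ hd c hc hv

theorem Walk.support_subset_of_start_mem {s : Set V} {u v : V} (p : G.Walk u v)
    (hs : G.support ⊆ s) (hu : u ∈ s) : ∀ w ∈ p.support, w ∈ s := by
  intro w hw
  by_cases hp : p.Nil
  · rw [Walk.nil_iff_support_eq.mp hp, List.mem_singleton] at hw
    exact hw ▸ hu
  · exact hs (mem_support_of_mem_walk_support p hp hw)

structure IsTreeOn (G : SimpleGraph V) (s : Set V) : Prop where
  support_subset : G.support ⊆ s
  isAcyclic : G.IsAcyclic
  reachable : ∀ ⦃x⦄, x ∈ s → ∀ ⦃y⦄, y ∈ s → G.Reachable x y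
  nonempty : s.Nonempty

theorem isTreeOn_bot_singleton (v : V) : IsTreeOn (⊥ : SimpleGraph V) {v} where
  support_subset := by simp [support_bot]
  isAcyclic := isAcyclic_bot
  reachable := by rintro x rfl y rfl; rfl
  nonempty := Set.singleton_nonempty v

theorem IsTreeOn.sup_sup_edge {s₁ s₂ : Set V} {a b : V} (h₁ : IsTreeOn G₁ s₁)
    (h₂ : IsTreeOn G₂ s₂) (hd : Disjoint s₁ s₂) (ha : a ∈ s₁) (hb : b ∈ s₂) :
    IsTreeOn (G₁ ⊔ G₂ ⊔ edge a b) (s₁ ∪ s₂) := by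
  have hsupp : Disjoint G₁.support G₂.support := hd.mono h₁.support_subset h₂.support_subset
  have hab : a ≠ b := hd.ne_of_mem ha hb
  have hnreach : ¬ (G₁ ⊔ G₂).Reachable a b := by
    rintro ⟨p⟩
    have hreach := (p.transfer G₁ (p.edges_subset_edgeSet_left_of_sup hsupp
      fun h => hd.notMem_of_mem_left ha (h₂.support_subset h))).reachable
    exact hd.notMem_of_mem_right hb
      (h₁.support_subset (mem_support_of_reachable hab.symm hreach.symm))
  refine ⟨?_, (isAcyclic_sup_of_disjoint_support h₁.isAcyclic h₂.isAcyclic hsupp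
    ).sup_edge_of_not_reachable hnreach, ?_, h₁.nonempty.inl⟩
  · rintro x ⟨y, (hxy | hxy) | hxy⟩
    · exact Or.inl (h₁.support_subset hxy.mem_support_left)
    · exact Or.inr (h₂.support_subset hxy.mem_support_left)
    · rcases (edge_adj _ _ _ _).mp hxy with ⟨⟨rfl, rfl⟩ | ⟨rfl, rfl⟩, -⟩
      · exact Or.inl ha
      · exact Or.inr hb
  · have hreach : ∀ x ∈ s₁ ∪ s₂, (G₁ ⊔ G₂ ⊔ edge a b).Reachable a x := by
      rintro x (hx | hx)
      · exact (h₁.reachable ha hx).mono (le_sup_left.trans le_sup_left)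
      · have hadj : (G₁ ⊔ G₂ ⊔ edge a b).Adj a b :=
          Or.inr ((edge_adj _ _ _ _).mpr ⟨Or.inl ⟨rfl, rfl⟩, hab⟩)
        exact hadj.reachable.trans ((h₂.reachable hb hx).mono (le_sup_right.trans le_sup_left))
    exact fun x hx y hy => (hreach x hx).symm.trans (hreach y hy)

theorem IsTreeOn.sup_edge {s : Set V} {v w : V} (h : IsTreeOn G s) (hv : v ∉ s) (hw : w ∈ s) :
    IsTreeOn (G ⊔ edge v w) (insert v s) := by
  have := h.sup_sup_edge (isTreeOn_bot_singleton v) (Set.disjoint_singleton_right.mpr hv) hw rfl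
  rwa [sup_bot_eq, edge_comm, Set.union_singleton] at this

theorem IsTreeOn.induce_isTree {s : Set V} (h : IsTreeOn G s) : (G.induce s).IsTree := by
  have : Nonempty s := h.nonempty.to_subtype
  refine ⟨Connected.mk ?_, h.isAcyclic.induce s⟩
  rintro ⟨x, hx⟩ ⟨y, hy⟩
  obtain ⟨p⟩ := h.reachable hx hy
  exact (p.connected_induce_support.preconnected ⟨x, p.start_mem_support⟩
    ⟨y, p.end_mem_support⟩).map
      (induceHomOfLE G (p.support_subset_of_start_mem h.support_subset hx)).toHom

end SimpleGraph

namespace MLL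

open SimpleGraph

theorem Formula.names_eq_toFinset (A : Formula) :
    A.names = (A.subs.map Formula.name).toFinset := by
  induction A <;> ext <;> simp_all [Formula.names, Formula.subs, Formula.name]

theorem seqSubs_cons (A : Formula) (Γ : Sequent) : seqSubs (A ::ₘ Γ) = ↑A.subs + seqSubs Γ :=
  Multiset.cons_bind _ _ _

theorem seqSubs_add (Γ Δ : Sequent) : seqSubs (Γ + Δ) = seqSubs Γ + seqSubs Δ :=
  Multiset.add_bind _ _ _

theorem mem_seqNames {Γ : Sequent} {x : ℕ} :
    x ∈ seqNames Γ ↔ x ∈ (seqSubs Γ).map Formula.name := by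
  induction Γ using Multiset.induction_on with
  | empty => simp [seqNames, seqSubs]
  | cons A Γ ih =>
    simp only [seqNames, seqSubs_cons, Formula.names_eq_toFinset] at ih ⊢
    simp [ih]

theorem Formula.self_mem_subs (A : Formula) : A ∈ A.subs := by
  cases A <;> simp [Formula.subs]

theorem name_mem_seqNames {Γ : Sequent} {A : Formula} (h : A ∈ Γ) : A.name ∈ seqNames Γ :=
  mem_seqNames.mpr (Multiset.mem_map_of_mem _ (Multiset.mem_bind.mpr ⟨A, h, A.self_mem_subs⟩))

theorem seqNames_add (Γ Δ : Sequent) : seqNames (Γ + Δ) = seqNames Γ ∪ seqNames Δ := by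
  simp [seqNames]

theorem seqSubs_singleton_one (n : ℕ) : seqSubs {Formula.one n} = {Formula.one n} := by
  simp [seqSubs, Formula.subs]

theorem seqSubs_bot (n : ℕ) (Γ : Sequent) :
    seqSubs (Formula.bot n ::ₘ Γ) = Formula.bot n ::ₘ seqSubs Γ := by
  simp [seqSubs_cons, Formula.subs]

theorem seqSubs_parr (n : ℕ) (A B : Formula) (Γ : Sequent) :
    seqSubs (Formula.parr n A B ::ₘ Γ) = Formula.parr n A B ::ₘ seqSubs (A ::ₘ B ::ₘ Γ) := by
  simp only [seqSubs_cons, Formula.subs, ← Multiset.cons_coe, ← Multiset.coe_add,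
    Multiset.cons_add, add_assoc]

theorem seqSubs_tens (n : ℕ) (A B : Formula) (Γ Δ : Sequent) :
    seqSubs (Formula.tens n A B ::ₘ (Γ + Δ)) =
      Formula.tens n A B ::ₘ seqSubs ((A ::ₘ Γ) + (B ::ₘ Δ)) := by
  simp only [seqSubs_cons, seqSubs_add, Formula.subs, ← Multiset.cons_coe, ← Multiset.coe_add,
    Multiset.cons_add, Multiset.add_cons, add_assoc, add_left_comm]

theorem seqNames_of_seqSubs_eq_cons {Γ Γ' : Sequent} {C : Formula}
    (h : seqSubs Γ' = C ::ₘ seqSubs Γ) :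
    seqNames Γ' = insert C.name (seqNames Γ) := by
  ext x
  simp [mem_seqNames, h]

theorem WellNamed.of_seqSubs_eq_cons {Γ Γ' : Sequent} {C : Formula}
    (h : seqSubs Γ' = C ::ₘ seqSubs Γ) (hW : WellNamed Γ') :
    WellNamed Γ ∧ C.name ∉ seqNames Γ := by
  rw [WellNamed, h, Multiset.map_cons, Multiset.nodup_cons, ← mem_seqNames] at hW
  exact hW.symm

theorem WellNamed.of_add {Γ Δ : Sequent} (hW : WellNamed (Γ + Δ)) :
    WellNamed Γ ∧ WellNamed Δ ∧ Disjoint (seqNames Γ) (seqNames Δ) := by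
  rw [WellNamed, seqSubs_add, Multiset.map_add, Multiset.nodup_add] at hW
  refine ⟨hW.1, hW.2.1, Finset.disjoint_left.mpr fun x hΓ hΔ => ?_⟩
  exact Multiset.disjoint_left.mp hW.2.2 (mem_seqNames.mp hΓ) (mem_seqNames.mp hΔ)

section SwitchGraph

variable {lk : Linking} {σ : Switching} {x y : ℕ}

theorem switchAdj_add {Γ Δ : Sequent} :
    switchAdj (Γ + Δ) lk σ x y ↔ switchAdj Γ lk σ x y ∨ switchAdj Δ lk σ x y := by
  simp only [switchAdj, IsBotName, HasSub, seqSubs_add, Multiset.mem_add, or_and_right, exists_or]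
  grind

theorem switchAdj_one {n : ℕ} : ¬ switchAdj {Formula.one n} lk σ x y := by
  simp [switchAdj, IsBotName, HasSub, seqSubs_singleton_one]

theorem switchAdj_bot {n : ℕ} {Γ : Sequent} :
    switchAdj (Formula.bot n ::ₘ Γ) lk σ x y ↔ switchAdj Γ lk σ x y ∨ (x = n ∧ y = lk n) := by
  simp only [switchAdj, IsBotName, HasSub, seqSubs_bot, Multiset.mem_cons, Formula.bot.injEq,
    reduceCtorEq, false_or, or_and_right]
  grind

theorem switchAdj_parr {n : ℕ} {A B : Formula} {Γ : Sequent} :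
    switchAdj (Formula.parr n A B ::ₘ Γ) lk σ x y ↔
      switchAdj (A ::ₘ B ::ₘ Γ) lk σ x y ∨ (x = n ∧ y = if σ n then A.name else B.name) := by
  simp only [switchAdj, IsBotName, HasSub, seqSubs_parr, Multiset.mem_cons, Formula.parr.injEq,
    reduceCtorEq, false_or, or_and_right, exists_or, existsAndEq, and_true]
  grind

theorem switchAdj_tens {n : ℕ} {A B : Formula} {Γ Δ : Sequent} :
    switchAdj (Formula.tens n A B ::ₘ (Γ + Δ)) lk σ x y ↔
      switchAdj ((A ::ₘ Γ) + (B ::ₘ Δ)) lk σ x y ∨ (x = n ∧ (y = A.name ∨ y = B.name)) := by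
  simp only [switchAdj, IsBotName, HasSub, seqSubs_tens, Multiset.mem_cons, Formula.tens.injEq,
    reduceCtorEq, false_or, or_and_right, exists_or, existsAndEq, and_true]
  grind

variable (lk σ)

theorem switchGraph_add (Γ Δ : Sequent) :
    switchGraph (Γ + Δ) lk σ = switchGraph Γ lk σ ⊔ switchGraph Δ lk σ := by
  ext x y
  simp only [switchGraph, fromRel_adj, sup_adj, switchAdj_add]
  tauto

theorem switchGraph_one (n : ℕ) : switchGraph {Formula.one n} lk σ = ⊥ := by
  ext x y
  simp [switchGraph, switchAdj_one]

theorem switchGraph_bot (n : ℕ) (Γ : Sequent) :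
    switchGraph (Formula.bot n ::ₘ Γ) lk σ = switchGraph Γ lk σ ⊔ edge n (lk n) := by
  ext x y
  simp only [switchGraph, fromRel_adj, sup_adj, edge_adj, switchAdj_bot]
  tauto

theorem switchGraph_parr (n : ℕ) (A B : Formula) (Γ : Sequent) :
    switchGraph (Formula.parr n A B ::ₘ Γ) lk σ =
      switchGraph (A ::ₘ B ::ₘ Γ) lk σ ⊔ edge n (if σ n then A.name else B.name) := by
  ext x y
  simp only [switchGraph, fromRel_adj, sup_adj, edge_adj, switchAdj_parr]
  tauto

theorem switchGraph_tens (n : ℕ) (A B : Formula) (Γ Δ : Sequent) :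
    switchGraph (Formula.tens n A B ::ₘ (Γ + Δ)) lk σ =
      switchGraph (A ::ₘ Γ) lk σ ⊔ edge n A.name ⊔ switchGraph (B ::ₘ Δ) lk σ ⊔ edge n B.name := by
  ext x y
  simp only [switchGraph, fromRel_adj, sup_adj, edge_adj, switchAdj_tens, switchAdj_add]
  tauto

end SwitchGraph

theorem validLinking_of_support_subset {Γ : Sequent} {lk : Linking} {σ : Switching}
    (h : (switchGraph Γ lk σ).support ⊆ seqNames Γ) : ValidLinking Γ lk := by
  intro a ha
  by_cases hlk : lk a = a
  · rw [hlk]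
    exact mem_seqNames.mpr (Multiset.mem_map_of_mem Formula.name ha)
  · have hadj : (switchGraph Γ lk σ).Adj a (lk a) :=
      (fromRel_adj _ _ _).mpr ⟨Ne.symm hlk, Or.inl (Or.inr (Or.inr ⟨ha, rfl⟩))⟩
    exact h hadj.mem_support_right

theorem Translates.isTreeOn {Γ : Sequent} {π : Proof Γ} {lk : Linking} (h : Translates π lk)
    (hW : WellNamed Γ) (σ : Switching) : IsTreeOn (switchGraph Γ lk σ) (seqNames Γ) := by
  induction h with
  | one =>
    rw [switchGraph_one]
    simpa [seqNames, Formula.names] using isTreeOn_bot_singleton _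
  | @bot Γ n _ _ hlk _ ih =>
    obtain ⟨hW, hn⟩ := hW.of_seqSubs_eq_cons (seqSubs_bot n Γ)
    rw [switchGraph_bot, seqNames_of_seqSubs_eq_cons (seqSubs_bot n Γ), Finset.coe_insert]
    exact (ih hW).sup_edge hn hlk
  | @parr Γ A B n _ _ _ ih =>
    obtain ⟨hW, hn⟩ := hW.of_seqSubs_eq_cons (seqSubs_parr n A B Γ)
    rw [switchGraph_parr, seqNames_of_seqSubs_eq_cons (seqSubs_parr n A B Γ), Finset.coe_insert]
    refine (ih hW).sup_edge hn ?_
    split_ifs <;> exact name_mem_seqNames (by simp)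
  | @tens Γ Δ A B n _ _ _ _ _ ih₁ ih₂ =>
    obtain ⟨hW, hn⟩ := hW.of_seqSubs_eq_cons (seqSubs_tens n A B Γ Δ)
    obtain ⟨hW₁, hW₂, hd⟩ := hW.of_add
    rw [switchGraph_tens, seqNames_of_seqSubs_eq_cons (seqSubs_tens n A B Γ Δ), seqNames_add,
      Finset.coe_insert, Finset.coe_union, ← Set.insert_union]
    rw [seqNames_add, Finset.mem_union, not_or] at hn
    refine ((ih₁ hW₁).sup_edge hn.1 (name_mem_seqNames (by simp))).sup_sup_edge (ih₂ hW₂) ?_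
      (Set.mem_insert n _) (name_mem_seqNames (by simp))
    exact Set.disjoint_insert_left.mpr ⟨hn.2, Finset.disjoint_coe.mpr hd⟩

end MLL

open MLL in
/-- If `Π` is a cut-free, identity-free proof of a sequent `Γ` in
unit-only MLL and `Π ⇒ λ`, then `(Γ, λ)` is a proof net, i.e. `λ` is a correct
linking for `Γ`. -/
theorem mll_translation_correct {Γ : Sequent} (hW : WellNamed Γ)
    (π : Proof Γ) (lk : Linking) (h : Translates π lk) :
    Correct Γ lk :=
  ⟨validLinking_of_support_subset (h.isTreeOn hW fun _ => true).support_subset,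
    fun σ => (h.isTreeOn hW σ).induce_isTree⟩
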